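/- arXiv:1702.05426 — 3 statements merged into one kernel-verified Lean document; each statement's English description precedes it below -/
import Mathlib

section
/- Let f : ℝ → ℝ be nonnegative and nonincreasing on [2,∞), and suppose the integral ∫₂^∞ f(x)/ln(x) dx is finite. Then the sum of f over the prime numbers converges, i.e. ∑_{p prime} f(p) < ∞. -/
/-!
Chebyshev's elementary bound `∏_{p ≤ m} p ≤ 4 ^ m` shows that `[2^n, 2^(n+1))` contains at most
`2^(n+2) / n` primes; as `f` is nonincreasing, these primes contribute at most
`4 log 2 · 2^n f(2^n) / log 2^n` to the sum. Since `f / log` is nonincreasing too, the quantity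
`2^n f(2^(n+1)) / log 2^(n+1)` is bounded by the integral of `f / log` over `(2^n, 2^(n+1)]`,
and these integrals over disjoint intervals are summable.
-/

open Finset MeasureTheory

def dyadicPrimes (n : ℕ) : Finset ℕ := {p ∈ Ico (2 ^ n) (2 ^ (n + 1)) | p.Prime}

theorem pow_card_filter_prime_Ico_le (n m : ℕ) : n ^ #{p ∈ Ico n m | p.Prime} ≤ 4 ^ m :=
  calc n ^ #{p ∈ Ico n m | p.Prime}
      = ∏ _p ∈ {p ∈ Ico n m | p.Prime}, n := (prod_const n).symm
    _ ≤ ∏ p ∈ {p ∈ Ico n m | p.Prime}, p :=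
      prod_le_prod' fun p hp => (mem_Ico.1 (mem_filter.1 hp).1).1
    _ ≤ primorial m := by
      refine prod_le_prod_of_subset_of_one_le' (filter_subset_filter _ fun p hp => ?_)
        fun p hp _ => (mem_filter.1 hp).2.one_lt.le
      exact mem_range.2 (Nat.lt_succ_of_lt (mem_Ico.1 hp).2)
    _ ≤ 4 ^ m := primorial_le_four_pow m

theorem card_dyadicPrimes_mul_le (n : ℕ) : #(dyadicPrimes n) * n ≤ 2 ^ (n + 2) := by
  have h := pow_card_filter_prime_Ico_le (2 ^ n) (2 ^ (n + 1))
  rw [← pow_mul, show (4 : ℕ) ^ 2 ^ (n + 1) = 2 ^ 2 ^ (n + 2) by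
    rw [show (4 : ℕ) = 2 ^ 2 by norm_num, ← pow_mul, pow_succ 2 (n + 1), mul_comm]] at h
  rw [mul_comm]
  exact (Nat.pow_le_pow_iff_right one_lt_two).1 h

theorem sum_dyadicPrimes_le {f : ℝ → ℝ} {n : ℕ} (hn : n ≠ 0)
    (hf : AntitoneOn f (Set.Ici (2 ^ n))) (hf₀ : 0 ≤ f (2 ^ n)) :
    ∑ p ∈ dyadicPrimes n, f p ≤ 4 * Real.log 2 * (2 ^ n * (f (2 ^ n) / Real.log (2 ^ n))) := by
  have hn' : (0 : ℝ) < n := by positivity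
  have hterm : ∀ p ∈ dyadicPrimes n, f p ≤ f (2 ^ n) := by
    intro p hp
    have hp : ((2 ^ n : ℕ) : ℝ) ≤ p := by exact_mod_cast (mem_Ico.1 (mem_filter.1 hp).1).1
    push_cast at hp
    exact hf Set.self_mem_Ici hp hp
  have hcard : (#(dyadicPrimes n) : ℝ) ≤ 2 ^ (n + 2) / n :=
    (le_div_iff₀ hn').2 (by exact_mod_cast card_dyadicPrimes_mul_le n)
  calc ∑ p ∈ dyadicPrimes n, f p ≤ #(dyadicPrimes n) * f (2 ^ n) := by
        simpa using sum_le_card_nsmul _ _ _ hterm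
    _ ≤ 2 ^ (n + 2) / n * f (2 ^ n) := by gcongr
    _ = _ := by rw [Real.log_pow]; field_simp; ring

theorem AntitoneOn.div_log {f : ℝ → ℝ} {s : Set ℝ} (hf : AntitoneOn f s)
    (hf₀ : ∀ x ∈ s, 0 ≤ f x) (hs : s ⊆ Set.Ioi 1) :
    AntitoneOn (fun x => f x / Real.log x) s := fun x hx _ hy hxy =>
  div_le_div₀ (hf₀ x hx) (hf hx hy hxy) (Real.log_pos (hs hx))
    (Real.log_le_log (zero_lt_one.trans (hs hx)) hxy)

theorem AntitoneOn.sub_mul_le_setIntegral_Ioc {g : ℝ → ℝ} {a b : ℝ} (hab : a < b)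
    (hg : AntitoneOn g (Set.Ioc a b)) (hint : IntegrableOn g (Set.Ioc a b)) :
    (b - a) * g b ≤ ∫ x in Set.Ioc a b, g x := by
  have h := setIntegral_ge_of_const_le_real measurableSet_Ioc (by simp)
    (fun x hx => hg hx (Set.right_mem_Ioc.2 hab) hx.2) hint
  rwa [measureReal_def, Real.volume_Ioc, ENNReal.toReal_ofReal (by linarith), mul_comm] at h

theorem summable_two_pow_mul_of_integrableOn_Ioi {g : ℝ → ℝ} {a : ℝ} (ha : 0 < a)
    (hg₀ : ∀ x ∈ Set.Ioi a, 0 ≤ g x) (hg : AntitoneOn g (Set.Ioi a))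
    (hint : IntegrableOn g (Set.Ioi a)) :
    Summable fun n : ℕ => 2 ^ n * g (a * 2 ^ (n + 1)) := by
  have hlt : ∀ n : ℕ, a * 2 ^ n < a * 2 ^ (n + 1) := fun n => by gcongr <;> norm_num
  have hmono : Monotone fun n : ℕ => a * 2 ^ n := (strictMono_nat_of_lt_succ hlt).monotone
  have hs : ∀ n : ℕ, Set.Ioc (a * 2 ^ n) (a * 2 ^ (n + 1)) ⊆ Set.Ioi a := fun n x hx =>
    (le_mul_of_one_le_right ha.le (one_le_pow₀ one_le_two)).trans_lt hx.1
  have hsum : Summable fun n : ℕ => ∫ x in Set.Ioc (a * 2 ^ n) (a * 2 ^ (n + 1)), g x :=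
    (hasSum_integral_iUnion (fun n => measurableSet_Ioc) hmono.pairwise_disjoint_on_Ioc_succ
      (hint.mono_set (Set.iUnion_subset hs))).summable
  refine (hsum.mul_left a⁻¹).of_nonneg_of_le (fun n => ?_) fun n => ?_
  · exact mul_nonneg (by positivity) (hg₀ _ (hs n (Set.right_mem_Ioc.2 (hlt n))))
  · rw [le_inv_mul_iff₀ ha]
    calc a * (2 ^ n * g (a * 2 ^ (n + 1)))
        = (a * 2 ^ (n + 1) - a * 2 ^ n) * g (a * 2 ^ (n + 1)) := by ring
      _ ≤ ∫ x in Set.Ioc (a * 2 ^ n) (a * 2 ^ (n + 1)), g x :=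
        (hg.mono (hs n)).sub_mul_le_setIntegral_Ioc (hlt n) (hint.mono_set (hs n))

theorem summable_of_summable_sum_Ico_two_pow {g : ℕ → ℝ} (hg : 0 ≤ g)
    (h : Summable fun n => ∑ m ∈ Ico (2 ^ n) (2 ^ (n + 1)), g m) : Summable g := by
  have hsplit : ∀ N, ∑ m ∈ Ico 1 (2 ^ N), g m =
      ∑ n ∈ range N, ∑ m ∈ Ico (2 ^ n) (2 ^ (n + 1)), g m := by
    intro N
    induction N with
    | zero => simp
    | succ N ih =>
      rw [sum_range_succ, ← ih,
        sum_Ico_consecutive _ N.one_le_two_pow (Nat.pow_le_pow_right two_pos N.le_succ)]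
  refine summable_of_sum_range_le hg (c := g 0 + ∑' n, ∑ m ∈ Ico (2 ^ n) (2 ^ (n + 1)), g m)
    fun N => ?_
  calc ∑ m ∈ range N, g m ≤ ∑ m ∈ range (2 ^ N), g m :=
        sum_le_sum_of_subset_of_nonneg (range_subset_range.2 N.lt_two_pow_self.le)
          fun m _ _ => hg m
    _ = g 0 + ∑ m ∈ Ico 1 (2 ^ N), g m := by
        rw [range_eq_Ico, sum_eq_sum_Ico_succ_bot N.two_pow_pos]
    _ ≤ _ := by
        rw [hsplit]
        gcongr
        exact h.sum_le_tsum _ fun n _ => sum_nonneg fun m _ => hg m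

theorem summable_primes_of_summable_sum_dyadicPrimes {F : ℕ → ℝ}
    (hF : ∀ p : ℕ, p.Prime → 0 ≤ F p) (h : Summable fun n => ∑ p ∈ dyadicPrimes n, F p) :
    Summable fun p : Nat.Primes => F p := by
  refine (summable_subtype_iff_indicator (s := {p : ℕ | p.Prime})).2
    (summable_of_summable_sum_Ico_two_pow (fun m => Set.indicator_nonneg hF m) ?_)
  simpa only [dyadicPrimes, sum_filter, Set.indicator_apply, Set.mem_ofPred_eq] using h

/-- If `f : ℝ → ℝ` is nonnegative and nonincreasing on `[2,∞)` and
`x ↦ f x / ln x` is integrable on `[2,∞)`, then `∑_{p prime} f p` converges. -/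
theorem prime_sum_summable_of_integrable (f : ℝ → ℝ)
    (hf_nonneg : ∀ x ∈ Set.Ici (2 : ℝ), 0 ≤ f x)
    (hf_anti : AntitoneOn f (Set.Ici (2 : ℝ)))
    (hf_int : MeasureTheory.IntegrableOn (fun x => f x / Real.log x) (Set.Ici (2 : ℝ))) :
    Summable (fun p : Nat.Primes => f ((p : ℕ) : ℝ)) := by
  have hIoi : Set.Ioi (2 : ℝ) ⊆ Set.Ici 2 := Set.Ioi_subset_Ici_self
  have hf_primes : ∀ p : ℕ, p.Prime → 0 ≤ f p := fun p hp =>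
    hf_nonneg p (Set.mem_Ici.2 (by exact_mod_cast hp.two_le))
  have hpow : ∀ n : ℕ, (2 : ℝ) ≤ 2 ^ (n + 2) := fun n => le_self_pow₀ one_le_two (by omega)
  have hcond := summable_two_pow_mul_of_integrableOn_Ioi two_pos
    (fun x hx => div_nonneg (hf_nonneg x (hIoi hx)) (Real.log_nonneg (by linarith [hx.out])))
    ((hf_anti.mono hIoi).div_log (fun x hx => hf_nonneg x (hIoi hx))
      (Set.Ioi_subset_Ioi one_le_two))
    (hf_int.mono_set hIoi)
  have hblocks : Summable fun n => ∑ p ∈ dyadicPrimes (n + 2), f p := by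
    refine (hcond.mul_left (16 * Real.log 2)).of_nonneg_of_le
      (fun n => sum_nonneg fun p hp => hf_primes p (mem_filter.1 hp).2) fun n => ?_
    calc _ ≤ _ := sum_dyadicPrimes_le (n := n + 2) (by omega)
          (hf_anti.mono (Set.Ici_subset_Ici.2 (hpow n))) (hf_nonneg _ (hpow n))
      _ = _ := by rw [show (2 : ℝ) * 2 ^ (n + 1) = 2 ^ (n + 2) by ring]; ring
  exact summable_primes_of_summable_sum_dyadicPrimes hf_primes
    ((summable_nat_add_iff 2).1 hblocks)
end

section
/- Let α, β be real numbers with β > 0 and 1 < α ≤ β + 1. Then the function V_{α,β}(t) = ∑_{p prime} p^{−α} cos(2π p^β t) is Hölder continuous on [0,1): there exist a constant C > 0 and an exponent s ∈ (0,1] such that |V_{α,β}(t) − V_{α,β}(t₀)| ≤ C·|t − t₀|^s for all t, t₀ ∈ [0,1). -/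
/-!
Each term of the series is Hölder with exponent `s` at a cost of a factor `p^{βs}`: interpolating
`|cos a - cos b| ≤ 2` with `|cos a - cos b| ≤ |a - b|` gives `|cos a - cos b| ≤ 2 |a - b|^s`, so the
`p`-th term moves by at most `2 (2π)^s p^{βs-α} |t - t₀|^s`. For `s = (α - 1)/(2β)` the majorant
`∑ p^{βs-α} = ∑ p^{-(α+1)/2}` converges, and `s ≤ 1` because `α ≤ β + 1`.
-/

open Real

noncomputable def primeCosSeries (α β t : ℝ) : ℝ :=
  ∑' p : Nat.Primes, ((p : ℕ) : ℝ) ^ (-α) * cos (2 * π * ((p : ℕ) : ℝ) ^ β * t)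

lemma abs_cos_sub_cos_le_two_mul_rpow {s : ℝ} (hs0 : 0 ≤ s) (hs1 : s ≤ 1) (a b : ℝ) :
    |cos a - cos b| ≤ 2 * |a - b| ^ s := by
  rcases le_or_gt |a - b| 1 with hle | hgt
  · calc |cos a - cos b| ≤ |a - b| := abs_cos_sub_cos_le a b
      _ ≤ |a - b| ^ s := self_le_rpow_of_le_one (abs_nonneg _) hle hs1
      _ ≤ 2 * |a - b| ^ s := by linarith [rpow_nonneg (abs_nonneg (a - b)) s]
  · calc |cos a - cos b| ≤ |cos a| + |cos b| := abs_sub _ _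
      _ ≤ 2 := by linarith [abs_cos_le_one a, abs_cos_le_one b]
      _ ≤ 2 * |a - b| ^ s := by linarith [one_le_rpow hgt.le hs0]

lemma abs_rpow_mul_cos_sub_le {α β s x : ℝ} (hx : 0 < x) (hs0 : 0 ≤ s) (hs1 : s ≤ 1)
    (t t₀ : ℝ) :
    |x ^ (-α) * cos (2 * π * x ^ β * t) - x ^ (-α) * cos (2 * π * x ^ β * t₀)| ≤
      2 * (2 * π) ^ s * x ^ (β * s - α) * |t - t₀| ^ s := by
  have hphase : |2 * π * x ^ β * t - 2 * π * x ^ β * t₀| = 2 * π * x ^ β * |t - t₀| := by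
    rw [← mul_sub, abs_mul, abs_of_pos (by positivity)]
  calc |x ^ (-α) * cos (2 * π * x ^ β * t) - x ^ (-α) * cos (2 * π * x ^ β * t₀)|
      = x ^ (-α) * |cos (2 * π * x ^ β * t) - cos (2 * π * x ^ β * t₀)| := by
        rw [← mul_sub, abs_mul, abs_of_pos (rpow_pos_of_pos hx _)]
    _ ≤ x ^ (-α) * (2 * (2 * π * x ^ β * |t - t₀|) ^ s) := by
        rw [← hphase]
        exact mul_le_mul_of_nonneg_left (abs_cos_sub_cos_le_two_mul_rpow hs0 hs1 _ _)
          (rpow_nonneg hx.le _)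
    _ = 2 * (2 * π) ^ s * x ^ (β * s - α) * |t - t₀| ^ s := by
        rw [mul_rpow (by positivity) (abs_nonneg _), mul_rpow (by positivity) (by positivity),
          ← rpow_mul hx.le, rpow_sub hx, rpow_neg hx.le]
        ring

lemma summable_primes_rpow_mul_cos {α : ℝ} (hα : 1 < α) (β t : ℝ) :
    Summable fun p : Nat.Primes => ((p : ℕ) : ℝ) ^ (-α) * cos (2 * π * ((p : ℕ) : ℝ) ^ β * t) := by
  refine (Nat.Primes.summable_rpow.mpr (neg_lt_neg hα)).of_norm_bounded fun p => ?_
  rw [norm_mul, Real.norm_of_nonneg (rpow_nonneg (Nat.cast_nonneg _) _)]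
  exact mul_le_of_le_one_right (rpow_nonneg (Nat.cast_nonneg _) _) (abs_cos_le_one _)

theorem abs_primeCosSeries_sub_le {α β s : ℝ} (hα : 1 < α) (hs0 : 0 ≤ s) (hs1 : s ≤ 1)
    (hsum : β * s - α < -1) (t t₀ : ℝ) :
    |primeCosSeries α β t - primeCosSeries α β t₀| ≤
      2 * (2 * π) ^ s * (∑' p : Nat.Primes, ((p : ℕ) : ℝ) ^ (β * s - α)) * |t - t₀| ^ s := by
  rw [primeCosSeries, primeCosSeries, ← (summable_primes_rpow_mul_cos hα β t).tsum_sub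
    (summable_primes_rpow_mul_cos hα β t₀), ← Real.norm_eq_abs]
  refine tsum_of_norm_bounded
    (((Nat.Primes.summable_rpow.mpr hsum).hasSum.mul_left (2 * (2 * π) ^ s)).mul_right
      (|t - t₀| ^ s)) fun p => ?_
  exact abs_rpow_mul_cos_sub_le (Nat.cast_pos.mpr p.prop.pos) hs0 hs1 t t₀

/-- For `β > 0` and `1 < α ≤ β + 1`, the function
`V_{α,β}(t) = ∑_{p prime} p^{-α} cos(2π p^β t)` is Hölder continuous on `[0,1)`:
there are `C > 0` and `s ∈ (0,1]` with `|V(t) - V(t₀)| ≤ C |t - t₀|^s` for `t, t₀ ∈ [0,1)`. -/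
theorem prime_power_cos_series_holder (α β : ℝ) (hβ : 0 < β) (hα : 1 < α) (hαβ : α ≤ β + 1) :
    ∃ C > (0 : ℝ), ∃ s ∈ Set.Ioc (0 : ℝ) 1,
      ∀ t ∈ Set.Ico (0 : ℝ) 1, ∀ t₀ ∈ Set.Ico (0 : ℝ) 1,
        |(∑' p : Nat.Primes,
            ((p : ℕ) : ℝ) ^ (-α) * Real.cos (2 * Real.pi * ((p : ℕ) : ℝ) ^ β * t)) -
          (∑' p : Nat.Primes,
            ((p : ℕ) : ℝ) ^ (-α) * Real.cos (2 * Real.pi * ((p : ℕ) : ℝ) ^ β * t₀))| ≤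
          C * |t - t₀| ^ s := by
  set s := (α - 1) / (2 * β)
  have hs0 : 0 < s := div_pos (by linarith) (by linarith)
  have hs1 : s ≤ 1 := (div_le_one (by linarith)).mpr (by linarith)
  have hsum : β * s - α < -1 := by
    have : β * s = (α - 1) / 2 := by simp only [s]; field_simp
    linarith
  have hmajorant_pos : 0 < ∑' p : Nat.Primes, ((p : ℕ) : ℝ) ^ (β * s - α) :=
    (Nat.Primes.summable_rpow.mpr hsum).tsum_pos (fun _ => by positivity) ⟨2, Nat.prime_two⟩
      (by norm_num [rpow_pos_of_pos])
  exact ⟨_, by positivity, s, ⟨hs0, hs1⟩,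
    fun t _ t₀ _ => abs_primeCosSeries_sub_le hα hs0.le hs1 hsum t t₀⟩
end

section
/- Let q be a prime number and let l ∈ {1, …, q−1}. Then ∑_{p ≤ n, p prime, p ≡ l (mod q)} 1/p is asymptotically (1/(q−1))·ln ln n; that is, the ratio (∑_{p ≤ n, p ≡ l mod q} 1/p) / (ln ln n) tends to 1/(q−1) as n → ∞. -/
/-!
Let `Λₐ` be the von Mangoldt function restricted to the residue class `a` mod `q`. Its Dirichlet
series `∑ Λₐ(n) n⁻ˢ` is `φ(q)⁻¹ / (s - 1)` plus a function continuous on `re s ≥ 1` (this is the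
input to Mathlib's proof of Dirichlet's theorem). Karamata's Tauberian argument turns the pole
into `∑_{n ≤ N} Λₐ(n) / n ∼ log N / φ(q)`: for `aₙ ≥ 0` with `t ∑ aₙ n⁻ᵗ → c` as `t → 0⁺`, one gets
`t ∑ aₙ n⁻ᵗ P(n⁻ᵗ) → c ∫₀¹ P` for monomials `P`, hence for polynomials, and sandwiching the kernel
`x⁻¹ 𝟙[e⁻¹ ≤ x]` between polynomials with nearly equal integrals (Weierstrass) yields the limit for
the sum over `n ≤ e^{1/t}`. Prime powers only contribute a convergent series, and partial summation
against `1 / log p` turns `∑_{p ≤ N, p ≡ a} log p / p ∼ log N / φ(q)` into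
`∑_{p ≤ N, p ≡ a} 1 / p ∼ log log N / φ(q)`. For prime `q`, `φ(q) = q - 1`.
-/

open Filter Topology Finset Real Asymptotics

lemma tendsto_log_natCast_atTop : Tendsto (fun N : ℕ => log N) atTop atTop :=
  tendsto_log_atTop.comp tendsto_natCast_atTop_atTop

lemma tendsto_log_log_natCast_atTop : Tendsto (fun N : ℕ => log (log N)) atTop atTop :=
  tendsto_log_atTop.comp tendsto_log_natCast_atTop

lemma exists_polynomial_le_of_continuousOn {f : ℝ → ℝ} {a b : ℝ}
    (hf : ContinuousOn f (Set.Icc a b)) {ε : ℝ} (hε : 0 < ε) :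
    ∃ p : Polynomial ℝ, ∀ x ∈ Set.Icc a b, f x - ε ≤ p.eval x ∧ p.eval x ≤ f x := by
  obtain ⟨p, hp⟩ := exists_polynomial_near_of_continuousOn a b f hf (ε / 2) (half_pos hε)
  refine ⟨p - Polynomial.C (ε / 2), fun x hx => ?_⟩
  have := abs_lt.1 (hp x hx)
  simp only [Polynomial.eval_sub, Polynomial.eval_C]
  constructor <;> linarith

lemma exists_polynomial_ge_of_continuousOn {f : ℝ → ℝ} {a b : ℝ}
    (hf : ContinuousOn f (Set.Icc a b)) {ε : ℝ} (hε : 0 < ε) :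
    ∃ p : Polynomial ℝ, ∀ x ∈ Set.Icc a b, f x ≤ p.eval x ∧ p.eval x ≤ f x + ε := by
  obtain ⟨p, hp⟩ := exists_polynomial_le_of_continuousOn hf.neg hε
  refine ⟨-p, fun x hx => ?_⟩
  have := hp x hx
  simp only [Pi.neg_apply, Polynomial.eval_neg] at this ⊢
  constructor <;> linarith

lemma intervalIntegrable_inv_of_pos {a b : ℝ} (ha : 0 < a) (hb : 0 < b) :
    IntervalIntegrable (fun x : ℝ => x⁻¹) MeasureTheory.volume a b :=
  intervalIntegrable_inv_iff.2 (Or.inr fun h => by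
    rcases Set.mem_uIcc.1 h with h | h <;> linarith [h.1])

noncomputable def ramp (r δ x : ℝ) : ℝ := max 0 (min 1 ((x - r) / δ))

section Ramp

variable {r δ x : ℝ}

lemma ramp_nonneg : 0 ≤ ramp r δ x := le_max_left _ _

lemma ramp_le_one : ramp r δ x ≤ 1 := max_le zero_le_one (min_le_left _ _)

lemma ramp_of_le (hδ : 0 ≤ δ) (hx : x ≤ r) : ramp r δ x = 0 :=
  max_eq_left ((min_le_right _ _).trans (div_nonpos_of_nonpos_of_nonneg (by linarith) hδ))

lemma ramp_of_add_le (hδ : 0 < δ) (hx : r + δ ≤ x) : ramp r δ x = 1 := by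
  rw [ramp, min_eq_left ((le_div_iff₀ hδ).2 (by linarith)), max_eq_right zero_le_one]

lemma inv_mul_ramp_nonneg (hx : 0 ≤ x) : 0 ≤ x⁻¹ * ramp r δ x :=
  mul_nonneg (inv_nonneg.2 hx) ramp_nonneg

lemma inv_mul_ramp_le_inv (hx : 0 ≤ x) : x⁻¹ * ramp r δ x ≤ x⁻¹ :=
  mul_le_of_le_one_right (inv_nonneg.2 hx) ramp_le_one

lemma continuous_inv_mul_ramp (hr : 0 < r) (hδ : 0 ≤ δ) :
    Continuous fun x => x⁻¹ * ramp r δ x := by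
  refine continuous_iff_continuousAt.2 fun x => ?_
  rcases lt_or_ge x r with hx | hx
  · refine continuousAt_const.congr (f := fun _ => (0 : ℝ)) ?_
    filter_upwards [Iio_mem_nhds hx] with y hy
    rw [ramp_of_le hδ (le_of_lt hy), mul_zero]
  · have : Continuous (ramp r δ) := by unfold ramp; fun_prop
    exact (continuousAt_inv₀ (hr.trans_le hx).ne').mul this.continuousAt

lemma integral_inv_mul_ramp_le (hr : 0 < r) (hr₁ : r ≤ 1) (hδ : 0 ≤ δ) :
    ∫ x in (0 : ℝ)..1, x⁻¹ * ramp r δ x ≤ -log r := by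
  have hint a b := (continuous_inv_mul_ramp hr hδ).intervalIntegrable
    (μ := MeasureTheory.volume) a b
  rw [← intervalIntegral.integral_add_adjacent_intervals (hint 0 r) (hint r 1)]
  have hzero : ∫ x in (0 : ℝ)..r, x⁻¹ * ramp r δ x = 0 := by
    refine (intervalIntegral.integral_congr (g := fun _ => 0) fun x hx => ?_).trans
      intervalIntegral.integral_zero
    rw [Set.uIcc_of_le hr.le] at hx
    simp only [ramp_of_le hδ hx.2, mul_zero]
  have hle : ∫ x in r..1, x⁻¹ * ramp r δ x ≤ ∫ x in r..1, x⁻¹ :=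
    intervalIntegral.integral_mono_on hr₁ (hint r 1) (intervalIntegrable_inv_of_pos hr one_pos)
      fun x hx => inv_mul_ramp_le_inv (hr.le.trans hx.1)
  rw [integral_inv_of_pos hr one_pos, one_div, log_inv] at hle
  linarith

lemma neg_log_le_integral_inv_mul_ramp (hr : 0 < r) (hδ : 0 < δ) (hrδ : r + δ ≤ 1) :
    -log (r + δ) ≤ ∫ x in (0 : ℝ)..1, x⁻¹ * ramp r δ x := by
  have hint a b := (continuous_inv_mul_ramp hr hδ.le).intervalIntegrable
    (μ := MeasureTheory.volume) a b
  rw [← intervalIntegral.integral_add_adjacent_intervals (hint 0 (r + δ)) (hint (r + δ) 1)]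
  have hnonneg : 0 ≤ ∫ x in (0 : ℝ)..(r + δ), x⁻¹ * ramp r δ x :=
    intervalIntegral.integral_nonneg (by linarith) fun x hx => inv_mul_ramp_nonneg hx.1
  have heq : ∫ x in (r + δ)..1, x⁻¹ * ramp r δ x = ∫ x in (r + δ)..1, x⁻¹ := by
    refine intervalIntegral.integral_congr fun x hx => ?_
    rw [Set.uIcc_of_le hrδ] at hx
    simp only [ramp_of_add_le hδ hx.1, mul_one]
  rw [heq, integral_inv_of_pos (by linarith) one_pos, one_div, log_inv]
  linarith

end Ramp

/-- `x * karamataKernel x` is the indicator of `e⁻¹ ≤ x`, so at `x = n ^ (-(log N)⁻¹)` it selects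
`1 ≤ n ≤ N`; and `∫₀¹ karamataKernel = 1`. -/
noncomputable def karamataKernel (x : ℝ) : ℝ := if exp (-1) ≤ x then x⁻¹ else 0

lemma exists_polynomial_le_karamataKernel {ε : ℝ} (hε : 0 < ε) :
    ∃ P : Polynomial ℝ, (∀ x ∈ Set.Icc (0 : ℝ) 1, P.eval x ≤ karamataKernel x) ∧
      1 - ε ≤ ∫ x in (0 : ℝ)..1, P.eval x := by
  set β := exp (-1)
  have hβ₀ : 0 < β := exp_pos _
  have hβ₁ : β < 1 := exp_lt_one_iff.2 (by norm_num)
  have hlog : Tendsto (fun δ => -log (β + δ)) (𝓝 0) (𝓝 1) := by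
    have : ContinuousAt (fun δ => -log (β + δ)) 0 :=
      ((continuousAt_const.add continuousAt_id).log (by simp)).neg
    simpa [β] using this.tendsto
  obtain ⟨δ, ⟨hδlog, hδ₁⟩, hδ₀ : 0 < δ⟩ :=
    ((hlog.eventually_const_lt (by linarith : 1 - ε / 2 < 1)).and
      (eventually_lt_nhds (sub_pos.2 hβ₁)) |>.filter_mono nhdsWithin_le_nhds |>.and
      (self_mem_nhdsWithin : Set.Ioi (0 : ℝ) ∈ 𝓝[>] 0)).exists
  have hcont := continuous_inv_mul_ramp hβ₀ hδ₀.le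
  have hint := hcont.intervalIntegrable (μ := MeasureTheory.volume) 0 1
  obtain ⟨P, hP⟩ := exists_polynomial_le_of_continuousOn (a := 0) (b := 1) hcont.continuousOn
    (half_pos hε)
  refine ⟨P, fun x hx => (hP x hx).2.trans ?_, ?_⟩
  · unfold karamataKernel
    split_ifs with hxβ
    · exact inv_mul_ramp_le_inv hx.1
    · rw [ramp_of_le hδ₀.le (not_le.1 hxβ).le, mul_zero]
  · have hmono := intervalIntegral.integral_mono_on zero_le_one (hint.sub intervalIntegrable_const)
      (P.continuous.intervalIntegrable 0 1) fun x hx => (hP x hx).1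
    rw [intervalIntegral.integral_sub hint intervalIntegrable_const,
      intervalIntegral.integral_const, sub_zero, one_smul] at hmono
    linarith [neg_log_le_integral_inv_mul_ramp hβ₀ hδ₀ (by linarith)]

lemma exists_polynomial_ge_karamataKernel {ε : ℝ} (hε : 0 < ε) :
    ∃ P : Polynomial ℝ, (∀ x ∈ Set.Icc (0 : ℝ) 1, karamataKernel x ≤ P.eval x) ∧
      ∫ x in (0 : ℝ)..1, P.eval x ≤ 1 + ε := by
  set β := exp (-1)
  have hβ₀ : 0 < β := exp_pos _
  have hβ₁ : β < 1 := exp_lt_one_iff.2 (by norm_num)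
  have hlog : Tendsto (fun δ => -log (β - δ)) (𝓝 0) (𝓝 1) := by
    have : ContinuousAt (fun δ => -log (β - δ)) 0 :=
      ((continuousAt_const.sub continuousAt_id).log (by simp)).neg
    simpa [β] using this.tendsto
  obtain ⟨δ, ⟨hδlog, hδβ⟩, hδ₀ : 0 < δ⟩ :=
    ((hlog.eventually_lt_const (by linarith : 1 < 1 + ε / 2)).and (eventually_lt_nhds hβ₀)
      |>.filter_mono nhdsWithin_le_nhds |>.and
      (self_mem_nhdsWithin : Set.Ioi (0 : ℝ) ∈ 𝓝[>] 0)).exists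
  have hβδ : 0 < β - δ := sub_pos.2 hδβ
  have hcont := continuous_inv_mul_ramp hβδ hδ₀.le
  have hint := hcont.intervalIntegrable (μ := MeasureTheory.volume) 0 1
  obtain ⟨P, hP⟩ := exists_polynomial_ge_of_continuousOn (a := 0) (b := 1) hcont.continuousOn
    (half_pos hε)
  refine ⟨P, fun x hx => le_trans ?_ (hP x hx).1, ?_⟩
  · unfold karamataKernel
    split_ifs with hxβ
    · rw [ramp_of_add_le hδ₀ (by linarith), mul_one]
    · exact inv_mul_ramp_nonneg hx.1
  · have hmono := intervalIntegral.integral_mono_on zero_le_one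
      (P.continuous.intervalIntegrable 0 1) (hint.add intervalIntegrable_const)
      fun x hx => (hP x hx).2
    rw [intervalIntegral.integral_add hint intervalIntegrable_const,
      intervalIntegral.integral_const, sub_zero, one_smul] at hmono
    linarith [integral_inv_mul_ramp_le hβδ (by linarith) hδ₀.le]

lemma mul_karamataKernel (x : ℝ) : x * karamataKernel x = if exp (-1) ≤ x then 1 else 0 := by
  unfold karamataKernel
  split_ifs with hx
  · exact mul_inv_cancel₀ ((exp_pos _).trans_le hx).ne'
  · exact mul_zero x

lemma abs_karamataKernel_le (x : ℝ) : |karamataKernel x| ≤ exp 1 := by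
  unfold karamataKernel
  split_ifs with hx
  · rw [abs_inv, abs_of_pos ((exp_pos _).trans_le hx), ← inv_inv (exp 1), ← exp_neg]
    exact inv_anti₀ (exp_pos _) hx
  · simp [(exp_pos 1).le]

lemma natCast_rpow_neg_mem_Icc (n : ℕ) {t : ℝ} (ht : 0 < t) :
    (n : ℝ) ^ (-t) ∈ Set.Icc (0 : ℝ) 1 := by
  refine ⟨by positivity, ?_⟩
  rcases n.eq_zero_or_pos with rfl | hn
  · simp [ht.ne']
  · exact rpow_le_one_of_one_le_of_nonpos (by exact_mod_cast hn) (by linarith)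

lemma natCast_rpow_neg_mul_pow (n j : ℕ) {t : ℝ} (ht : 0 < t) :
    (n : ℝ) ^ (-t) * ((n : ℝ) ^ (-t)) ^ j = (n : ℝ) ^ (-((j + 1) * t)) := by
  have : -t + -t * j ≠ 0 := by nlinarith [j.cast_nonneg (α := ℝ)]
  rw [← rpow_mul_natCast n.cast_nonneg, ← rpow_add' n.cast_nonneg this]
  ring_nf

lemma exp_neg_one_le_natCast_rpow_iff {n N : ℕ} (hN : 1 < N) :
    exp (-1) ≤ (n : ℝ) ^ (-(log N)⁻¹) ↔ n ∈ Icc 1 N := by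
  have hlogN : 0 < log N := log_pos (by exact_mod_cast hN)
  rcases n.eq_zero_or_pos with rfl | hn
  · simp [(inv_pos.2 hlogN).ne', (exp_pos _).not_ge]
  · rw [rpow_def_of_pos (by exact_mod_cast hn), exp_le_exp, mul_neg, neg_le_neg_iff,
      ← div_eq_mul_inv, div_le_one hlogN, log_le_log_iff (by exact_mod_cast hn) (by positivity),
      Nat.cast_le, mem_Icc]
    exact ⟨fun h => ⟨hn, h⟩, And.right⟩

noncomputable def karamataSum (a : ℕ → ℝ) (φ : ℝ → ℝ) (t : ℝ) : ℝ :=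
  t * ∑' n : ℕ, a n * (n : ℝ) ^ (-t) * φ ((n : ℝ) ^ (-t))

section Karamata

variable {a : ℕ → ℝ} {c : ℝ}

lemma summable_mul_rpow_neg_mul (ha : ∀ n, 0 ≤ a n) {t : ℝ} (ht : 0 < t)
    (hsum : Summable fun n : ℕ => a n * (n : ℝ) ^ (-t)) {φ : ℝ → ℝ} {M : ℝ}
    (hφ : ∀ x ∈ Set.Icc (0 : ℝ) 1, ‖φ x‖ ≤ M) :
    Summable fun n : ℕ => a n * (n : ℝ) ^ (-t) * φ ((n : ℝ) ^ (-t)) := by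
  refine Summable.of_norm_bounded (hsum.mul_right M) fun n => ?_
  have hnonneg : 0 ≤ a n * (n : ℝ) ^ (-t) := mul_nonneg (ha n) (by positivity)
  rw [norm_mul, Real.norm_of_nonneg hnonneg]
  exact mul_le_mul_of_nonneg_left (hφ _ (natCast_rpow_neg_mem_Icc n ht)) hnonneg

lemma karamataSum_mono (ha : ∀ n, 0 ≤ a n) {t : ℝ} (ht : 0 < t)
    (hsum : Summable fun n : ℕ => a n * (n : ℝ) ^ (-t)) {φ ψ : ℝ → ℝ} {M N : ℝ}
    (hφ : ∀ x ∈ Set.Icc (0 : ℝ) 1, ‖φ x‖ ≤ M) (hψ : ∀ x ∈ Set.Icc (0 : ℝ) 1, ‖ψ x‖ ≤ N)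
    (hφψ : ∀ x ∈ Set.Icc (0 : ℝ) 1, φ x ≤ ψ x) :
    karamataSum a φ t ≤ karamataSum a ψ t := by
  refine mul_le_mul_of_nonneg_left (Summable.tsum_le_tsum (fun n => ?_)
    (summable_mul_rpow_neg_mul ha ht hsum hφ) (summable_mul_rpow_neg_mul ha ht hsum hψ)) ht.le
  exact mul_le_mul_of_nonneg_left (hφψ _ (natCast_rpow_neg_mem_Icc n ht))
    (mul_nonneg (ha n) (by positivity))

lemma exists_norm_eval_le (P : Polynomial ℝ) : ∃ M, ∀ x ∈ Set.Icc (0 : ℝ) 1, ‖P.eval x‖ ≤ M :=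
  isCompact_Icc.exists_bound_of_continuousOn P.continuous.continuousOn

lemma tendsto_mul_tsum_rpow_neg_const_mul
    (hc : Tendsto (fun t => t * ∑' n : ℕ, a n * (n : ℝ) ^ (-t)) (𝓝[>] 0) (𝓝 c))
    {k : ℝ} (hk : 0 < k) :
    Tendsto (fun t => t * ∑' n : ℕ, a n * (n : ℝ) ^ (-(k * t))) (𝓝[>] 0) (𝓝 (c / k)) := by
  have hmul : Tendsto (fun t : ℝ => k * t) (𝓝[>] 0) (𝓝[>] 0) :=
    tendsto_comap.mono_left (comap_mulLeft_nhdsGT_zero hk).ge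
  rw [div_eq_inv_mul]
  refine ((hc.comp hmul).const_mul k⁻¹).congr fun t => ?_
  simp only [Function.comp_apply]
  field_simp

lemma tendsto_karamataSum_polynomial (ha : ∀ n, 0 ≤ a n)
    (hsum : ∀ t : ℝ, 0 < t → Summable fun n : ℕ => a n * (n : ℝ) ^ (-t))
    (hc : Tendsto (fun t => t * ∑' n : ℕ, a n * (n : ℝ) ^ (-t)) (𝓝[>] 0) (𝓝 c))
    (P : Polynomial ℝ) :
    Tendsto (karamataSum a fun x => P.eval x) (𝓝[>] 0) (𝓝 (c * ∫ x in (0 : ℝ)..1, P.eval x)) := by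
  induction P using Polynomial.induction_on' with
  | add P Q hP hQ =>
    simp only [Polynomial.eval_add]
    rw [intervalIntegral.integral_add (P.continuous.intervalIntegrable 0 1)
      (Q.continuous.intervalIntegrable 0 1), mul_add]
    refine (hP.add hQ).congr' ?_
    filter_upwards [self_mem_nhdsWithin] with t (ht : 0 < t)
    obtain ⟨M, hM⟩ := exists_norm_eval_le P
    obtain ⟨N, hN⟩ := exists_norm_eval_le Q
    simp only [karamataSum, mul_add]
    rw [(summable_mul_rpow_neg_mul ha ht (hsum t ht) hM).tsum_add
      (summable_mul_rpow_neg_mul ha ht (hsum t ht) hN), mul_add]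
  | monomial j r =>
    simp only [Polynomial.eval_monomial, intervalIntegral.integral_const_mul, integral_pow]
    have hj : (0 : ℝ) < j + 1 := by positivity
    rw [one_pow, zero_pow j.succ_ne_zero, sub_zero, mul_one_div, mul_div_left_comm]
    refine ((tendsto_mul_tsum_rpow_neg_const_mul hc hj).const_mul r).congr' ?_
    filter_upwards [self_mem_nhdsWithin] with t (ht : 0 < t)
    simp only [karamataSum, ← natCast_rpow_neg_mul_pow _ j ht, ← tsum_mul_left]
    exact tsum_congr fun n => by ring

theorem tendsto_karamataSum_karamataKernel (ha : ∀ n, 0 ≤ a n)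
    (hsum : ∀ t : ℝ, 0 < t → Summable fun n : ℕ => a n * (n : ℝ) ^ (-t))
    (hc : Tendsto (fun t => t * ∑' n : ℕ, a n * (n : ℝ) ^ (-t)) (𝓝[>] 0) (𝓝 c)) :
    Tendsto (karamataSum a karamataKernel) (𝓝[>] 0) (𝓝 c) := by
  have hc₀ : 0 ≤ c := ge_of_tendsto hc (eventually_nhdsWithin_of_forall fun t (ht : 0 < t) =>
    mul_nonneg ht.le (tsum_nonneg fun n => mul_nonneg (ha n) (by positivity)))
  have hkernel : ∀ x ∈ Set.Icc (0 : ℝ) 1, ‖karamataKernel x‖ ≤ exp 1 :=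
    fun x _ => abs_karamataKernel_le x
  refine tendsto_order.2 ⟨fun b hb => ?_, fun b hb => ?_⟩
  · have hε : 0 < (c - b) / (c + 1) := div_pos (sub_pos.2 hb) (by linarith)
    obtain ⟨P, hP, hPint⟩ := exists_polynomial_le_karamataKernel hε
    obtain ⟨M, hM⟩ := exists_norm_eval_le P
    have hb' : b < c * ∫ x in (0 : ℝ)..1, P.eval x := by
      have : c * ((c - b) / (c + 1)) < c - b := by
        rw [mul_div_assoc', div_lt_iff₀ (by linarith)]
        nlinarith
      nlinarith [mul_le_mul_of_nonneg_left hPint hc₀]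
    filter_upwards [(tendsto_karamataSum_polynomial ha hsum hc P).eventually_const_lt hb',
      self_mem_nhdsWithin] with t hbt (ht : 0 < t)
    exact hbt.trans_le (karamataSum_mono ha ht (hsum t ht) hM hkernel hP)
  · have hε : 0 < (b - c) / (c + 1) := div_pos (sub_pos.2 hb) (by linarith)
    obtain ⟨P, hP, hPint⟩ := exists_polynomial_ge_karamataKernel hε
    obtain ⟨M, hM⟩ := exists_norm_eval_le P
    have hb' : c * ∫ x in (0 : ℝ)..1, P.eval x < b := by
      have : c * ((b - c) / (c + 1)) < b - c := by
        rw [mul_div_assoc', div_lt_iff₀ (by linarith)]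
        nlinarith
      nlinarith [mul_le_mul_of_nonneg_left hPint hc₀]
    filter_upwards [(tendsto_karamataSum_polynomial ha hsum hc P).eventually_lt_const hb',
      self_mem_nhdsWithin] with t hbt (ht : 0 < t)
    exact (karamataSum_mono ha ht (hsum t ht) hkernel hM hP).trans_lt hbt

theorem tendsto_sum_Icc_div_log_of_tendsto_mul_tsum_rpow_neg (ha : ∀ n, 0 ≤ a n)
    (hsum : ∀ t : ℝ, 0 < t → Summable fun n : ℕ => a n * (n : ℝ) ^ (-t))
    (hc : Tendsto (fun t => t * ∑' n : ℕ, a n * (n : ℝ) ^ (-t)) (𝓝[>] 0) (𝓝 c)) :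
    Tendsto (fun N : ℕ => (∑ n ∈ Icc 1 N, a n) / log N) atTop (𝓝 c) := by
  have hlog : Tendsto (fun N : ℕ => (log N)⁻¹) atTop (𝓝[>] 0) :=
    tendsto_nhdsWithin_iff.2 ⟨tendsto_log_natCast_atTop |>.inv_tendsto_atTop,
      (tendsto_log_natCast_atTop).eventually_gt_atTop 0 |>.mono
        fun N hN => inv_pos.2 hN⟩
  refine ((tendsto_karamataSum_karamataKernel ha hsum hc).comp hlog).congr' ?_
  filter_upwards [eventually_gt_atTop 1] with N hN
  simp only [Function.comp_apply, karamataSum, mul_assoc, mul_karamataKernel,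
    exp_neg_one_le_natCast_rpow_iff hN, mul_ite, mul_one, mul_zero]
  rw [tsum_eq_sum (s := Icc 1 N) fun n hn => if_neg hn, div_eq_inv_mul]
  exact congrArg _ (sum_congr rfl fun n hn => if_pos hn)

end Karamata

lemma log_add_two_sub_log_add_one_le {x : ℝ} (hx : 0 < x) :
    log (x + 2) - log (x + 1) ≤ log (x + 1) - log x := by
  have h : x * (x + 2) ≤ (x + 1) ^ 2 := by nlinarith
  have := log_le_log (by positivity) h
  rw [log_mul hx.ne' (by positivity), log_pow] at this
  push_cast at this
  linarith

/-- Partial summation against `1 / log` (`sum_range_div_log_eq`) turns the partial sums `D i` into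
`logLogWeight i * (D i / log i)` for `i ≥ 2`. -/
noncomputable def logLogWeight (i : ℕ) : ℝ := ((log i)⁻¹ - (log (i + 1 : ℕ))⁻¹) * log i

lemma logLogWeight_bounds {i : ℕ} (hi : 2 ≤ i) :
    log (log (i + 2)) - log (log (i + 1)) ≤ logLogWeight i ∧
      logLogWeight i ≤ log (log (i + 1)) - log (log i) := by
  have hi' : (2 : ℝ) ≤ i := by exact_mod_cast hi
  have hL : 0 < log i := log_pos (by linarith)
  have hL₁ : 0 < log (i + 1) := log_pos (by linarith)
  have hL₂ : 0 < log (i + 2) := log_pos (by linarith)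
  have hconcave := log_add_two_sub_log_add_one_le (x := i) (by linarith)
  have hweight : logLogWeight i = 1 - log i / log (i + 1) := by
    rw [logLogWeight]; push_cast; field_simp
  constructor
  · rw [hweight, ← log_div hL₂.ne' hL₁.ne']
    calc log (log (i + 2) / log (i + 1)) ≤ log (i + 2) / log (i + 1) - 1 :=
          log_le_sub_one_of_pos (by positivity)
      _ ≤ 1 - log i / log (i + 1) := by
          rw [div_sub_one hL₁.ne', one_sub_div hL₁.ne']
          gcongr
  · rw [hweight, ← log_div hL₁.ne' hL.ne']
    simpa only [inv_div] using one_sub_inv_le_log_of_pos (x := log (i + 1) / log i) (by positivity)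

lemma logLogWeight_nonneg (i : ℕ) : 0 ≤ logLogWeight i := by
  rcases lt_or_ge i 2 with hi | hi
  · interval_cases i <;> simp [logLogWeight]
  · have hi' : (2 : ℝ) ≤ i := by exact_mod_cast hi
    have hL : 0 < log i := log_pos (by linarith)
    refine mul_nonneg (sub_nonneg.2 (inv_anti₀ hL (log_le_log (by positivity) ?_))) hL.le
    push_cast; linarith

lemma sum_range_logLogWeight_bounds {N : ℕ} (hN : 2 ≤ N) :
    log (log N) - log (log 3) ≤ ∑ i ∈ range N, logLogWeight i ∧
      ∑ i ∈ range N, logLogWeight i ≤ log (log N) - log (log 2) := by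
  suffices log (log (N + 1)) - log (log 3) ≤ ∑ i ∈ range N, logLogWeight i ∧
      ∑ i ∈ range N, logLogWeight i ≤ log (log N) - log (log 2) by
    refine ⟨le_trans ?_ this.1, this.2⟩
    have h2 : (2 : ℝ) ≤ N := by exact_mod_cast hN
    gcongr
    · exact log_pos (by linarith)
    · linarith
  induction N, hN using Nat.le_induction with
  | base => norm_num [logLogWeight, sum_range_succ]
  | succ N hN ih =>
    have := logLogWeight_bounds hN
    rw [sum_range_succ, show ((N + 1 : ℕ) : ℝ) + 1 = N + 2 by push_cast; ring]
    push_cast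
    constructor <;> linarith

lemma tendsto_sum_range_logLogWeight_div_log_log :
    Tendsto (fun N => (∑ i ∈ range N, logLogWeight i) / log (log N)) atTop (𝓝 1) := by
  have hlim (C : ℝ) : Tendsto (fun N : ℕ => (log (log N) - C) / log (log N)) atTop (𝓝 1) := by
    have := (tendsto_const_nhds (x := (1 : ℝ))).sub
      ((tendsto_const_nhds (x := C)).div_atTop tendsto_log_log_natCast_atTop)
    rw [sub_zero] at this
    refine this.congr' ?_
    filter_upwards [tendsto_log_log_natCast_atTop.eventually_gt_atTop 0] with N hN
    field_simp
  refine tendsto_of_tendsto_of_tendsto_of_le_of_le' (hlim (log (log 3))) (hlim (log (log 2)))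
    ?_ ?_ <;>
  filter_upwards [eventually_ge_atTop 2, tendsto_log_log_natCast_atTop.eventually_gt_atTop 0]
    with N hN hpos <;> gcongr
  exacts [(sum_range_logLogWeight_bounds hN).1, (sum_range_logLogWeight_bounds hN).2]

lemma sum_range_div_log_eq (d : ℕ → ℝ) (N : ℕ) :
    ∑ n ∈ range (N + 1), d n / log n = (∑ n ∈ range (N + 1), d n) / log N +
      ∑ i ∈ range N, ((log i)⁻¹ - (log (i + 1 : ℕ))⁻¹) * ∑ n ∈ range (i + 1), d n := by
  have := sum_range_by_parts (fun n : ℕ => (log n)⁻¹) d (N + 1)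
  simp only [smul_eq_mul, Nat.add_sub_cancel] at this
  simp only [div_eq_inv_mul]
  rw [this, sub_eq_add_neg, ← sum_neg_distrib]
  exact congrArg _ (sum_congr rfl fun i _ => by ring)

theorem tendsto_sum_div_log_div_log_log {d : ℕ → ℝ} {c : ℝ}
    (hd : Tendsto (fun N : ℕ => (∑ n ∈ range (N + 1), d n) / log N) atTop (𝓝 c)) :
    Tendsto (fun N : ℕ => (∑ n ∈ range (N + 1), d n / log n) / log (log N)) atTop (𝓝 c) := by
  have hB : Tendsto (fun N => ∑ i ∈ range N, logLogWeight i) atTop atTop := by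
    refine tendsto_atTop_mono' _ ?_
      (tendsto_atTop_add_const_right _ (-log (log 3)) tendsto_log_log_natCast_atTop)
    filter_upwards [eventually_ge_atTop 2] with N hN
    exact (sum_range_logLogWeight_bounds hN).1
  have hterm : (fun i : ℕ => ((log i)⁻¹ - (log (i + 1 : ℕ))⁻¹) * ∑ n ∈ range (i + 1), d n -
      c * logLogWeight i) =o[atTop] logLogWeight := by
    have := ((isLittleO_one_iff ℝ).2 (tendsto_sub_nhds_zero_iff.2 hd)).mul_isBigO
      (isBigO_refl logLogWeight atTop)
    simp only [one_mul] at this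
    refine this.congr' ?_ EventuallyEq.rfl
    filter_upwards [eventually_ge_atTop 2] with i hi
    have : log i ≠ 0 := (log_pos (by exact_mod_cast hi)).ne'
    simp only [logLogWeight]
    field_simp
  have hsum := (hterm.sum_range logLogWeight_nonneg hB).tendsto_div_nhds_zero
  have hlim := ((hd.div_atTop tendsto_log_log_natCast_atTop).add
    (hsum.mul tendsto_sum_range_logLogWeight_div_log_log)).add
    (tendsto_sum_range_logLogWeight_div_log_log.const_mul c)
  rw [zero_add, zero_mul, zero_add, mul_one] at hlim
  refine hlim.congr' ?_
  filter_upwards [hB.eventually_gt_atTop 0, tendsto_log_log_natCast_atTop.eventually_gt_atTop 0]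
    with N hBN hLN
  rw [sum_range_div_log_eq, sum_sub_distrib, ← mul_sum]
  field_simp
  ring

lemma sum_Icc_one_eq_sum_range_succ {M : Type*} [AddCommMonoid M] {f : ℕ → M} (hf : f 0 = 0)
    (N : ℕ) : ∑ n ∈ Icc 1 N, f n = ∑ n ∈ range (N + 1), f n := by
  refine sum_subset (fun n hn => by simp at hn ⊢; omega) fun n hn hn' => ?_
  obtain rfl : n = 0 := by simp at hn hn'; omega
  exact hf

lemma tendsto_sum_range_div_log_of_summable {f : ℕ → ℝ} (hf : Summable f) :
    Tendsto (fun N : ℕ => (∑ n ∈ range (N + 1), f n) / log N) atTop (𝓝 0) :=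
  ((hf.hasSum.tendsto_sum_nat.comp (tendsto_add_atTop_nat 1)).div_atTop
    tendsto_log_natCast_atTop)

section PrimesInAP

open ArithmeticFunction.vonMangoldt

variable {q : ℕ} {a : ZMod q}

lemma summable_residueClass_div_rpow {x : ℝ} (hx : 1 < x) :
    Summable fun n : ℕ => residueClass a n / (n : ℝ) ^ x := by
  have := (LSeriesSummable_of_abscissaOfAbsConv_lt_re (s := x)
    ((abscissaOfAbsConv_residueClass_le_one a).trans_lt
      (by simp only [Complex.ofReal_re]; exact_mod_cast hx))).norm
  refine this.congr fun n => ?_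
  rcases eq_or_ne n 0 with rfl | hn
  · simp
  · simp [hn, abs_of_nonneg (residueClass_nonneg a n)]

lemma residueClass_div_eq (n : ℕ) :
    residueClass a n / n = (if n.Prime ∧ (n : ZMod q) = a then log n / n else 0) +
      (if n.Prime then 0 else residueClass a n) / n := by
  by_cases hp : n.Prime
  · by_cases hn : (n : ZMod q) = a
    · simp [hp, hn, ArithmeticFunction.vonMangoldt_apply_prime hp]
    · simp [hp, hn]
  · simp [hp]

lemma LSeries_residueClass_ofReal {x : ℝ} :
    LSeries (fun n => (residueClass a n : ℂ)) x =
      ((∑' n : ℕ, residueClass a n / (n : ℝ) ^ x : ℝ) : ℂ) := by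
  rw [Complex.ofReal_tsum]
  refine tsum_congr fun n => ?_
  rcases eq_or_ne n 0 with rfl | hn
  · simp
  · rw [LSeries.term_of_ne_zero hn, Complex.ofReal_div, Complex.ofReal_cpow n.cast_nonneg]
    push_cast
    rfl

variable [NeZero q]

lemma tsum_residueClass_div_rpow (ha : IsUnit a) {x : ℝ} (hx : 1 < x) :
    ∑' n : ℕ, residueClass a n / (n : ℝ) ^ x =
      (LFunctionResidueClassAux a x).re + (q.totient : ℝ)⁻¹ / (x - 1) := by
  have := congrArg Complex.re (eqOn_LFunctionResidueClassAux ha (show 1 < (x : ℂ).re by simpa))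
  simp only at this
  rw [LSeries_residueClass_ofReal] at this
  have h2 : ((q.totient : ℂ)⁻¹ / ((x : ℂ) - 1)) = (((q.totient : ℝ)⁻¹ / (x - 1) : ℝ) : ℂ) := by
    push_cast; rfl
  rw [h2, ← Complex.ofReal_sub, Complex.ofReal_re] at this
  linarith

lemma div_natCast_mul_rpow_neg (y : ℝ) (n : ℕ) {t : ℝ} (ht : 0 < t) :
    y / n * (n : ℝ) ^ (-t) = y / (n : ℝ) ^ (1 + t) := by
  rcases eq_or_ne n 0 with rfl | hn
  · rw [Nat.cast_zero, div_zero, zero_mul, zero_rpow (by positivity), div_zero]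
  · rw [rpow_add (by positivity), rpow_one, rpow_neg n.cast_nonneg]
    field_simp

lemma tendsto_mul_tsum_residueClass_div_mul_rpow_neg (ha : IsUnit a) :
    Tendsto (fun t : ℝ => t * ∑' n : ℕ, residueClass a n / n * (n : ℝ) ^ (-t)) (𝓝[>] 0)
      (𝓝 (q.totient : ℝ)⁻¹) := by
  have hcont : ContinuousWithinAt (fun t : ℝ => (LFunctionResidueClassAux a (1 + t : ℝ)).re)
      (Set.Ici 0) 0 := by
    have := (continuousOn_LFunctionResidueClassAux a).comp
      (f := fun t : ℝ => ((1 + t : ℝ) : ℂ)) (s := Set.Ici 0) (by fun_prop) fun t ht => by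
        simpa using ht
    exact Complex.continuous_re.continuousAt.comp_continuousWithinAt (this 0 (by simp))
  have hlim := ((tendsto_nhdsWithin_of_tendsto_nhds tendsto_id).mul
    (hcont.tendsto.mono_left (nhdsWithin_mono _ Set.Ioi_subset_Ici_self))).add_const
    (q.totient : ℝ)⁻¹
  rw [zero_mul, zero_add] at hlim
  refine hlim.congr' ?_
  filter_upwards [self_mem_nhdsWithin] with t (ht : 0 < t)
  simp only [div_natCast_mul_rpow_neg _ _ ht, id]
  rw [tsum_residueClass_div_rpow ha (by linarith), add_sub_cancel_left]
  field_simp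

theorem tendsto_sum_prime_log_div_div_log (ha : IsUnit a) :
    Tendsto (fun N : ℕ => (∑ n ∈ range (N + 1),
      if n.Prime ∧ (n : ZMod q) = a then log n / n else 0) / log N) atTop
      (𝓝 (q.totient : ℝ)⁻¹) := by
  have hall := tendsto_sum_Icc_div_log_of_tendsto_mul_tsum_rpow_neg
    (fun n => div_nonneg (residueClass_nonneg a n) n.cast_nonneg)
    (fun t ht => by simpa only [div_natCast_mul_rpow_neg _ _ ht] using
      summable_residueClass_div_rpow (a := a) (by linarith : 1 < 1 + t))
    (tendsto_mul_tsum_residueClass_div_mul_rpow_neg ha)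
  have := hall.sub (tendsto_sum_range_div_log_of_summable (summable_residueClass_non_primes_div a))
  rw [sub_zero] at this
  refine this.congr fun N => ?_
  rw [sum_Icc_one_eq_sum_range_succ (f := fun n => residueClass a n / n) (by simp), ← sub_div,
    ← sum_sub_distrib]
  simp only [residueClass_div_eq, add_sub_cancel_right]

theorem tendsto_sum_prime_inv_div_log_log (ha : IsUnit a) :
    Tendsto (fun N : ℕ => (∑ p ∈ (range (N + 1)).filter (fun p : ℕ => p.Prime ∧ (p : ZMod q) = a),
      (1 : ℝ) / p) / log (log N)) atTop (𝓝 (q.totient : ℝ)⁻¹) := by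
  refine (tendsto_sum_div_log_div_log_log (tendsto_sum_prime_log_div_div_log ha)).congr fun N => ?_
  rw [sum_filter]
  congr 1
  refine sum_congr rfl fun n _ => ?_
  split_ifs with hn
  · have : log n ≠ 0 := (log_pos (by exact_mod_cast hn.1.one_lt)).ne'
    field_simp
  · exact zero_div _

end PrimesInAP

/-- Mertens' theorem in arithmetic progressions: for `q` prime and `1 ≤ l ≤ q - 1`,
`∑_{p ≤ n, p ≡ l (mod q)} 1/p ∼ (1/(q-1)) ln ln n`. -/
theorem mertens_arithmetic_progression (q : ℕ) (hq : q.Prime) (l : ℕ) (hl : 1 ≤ l)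
    (hl' : l ≤ q - 1) :
    Tendsto
      (fun n : ℕ =>
        (∑ p ∈ (Finset.range (n + 1)).filter (fun p => Nat.Prime p ∧ p % q = l),
          (1 : ℝ) / p) / Real.log (Real.log n))
      atTop (nhds (1 / ((q : ℝ) - 1))) := by
  have : NeZero q := ⟨hq.ne_zero⟩
  have hlq : l < q := by omega
  have hunit : IsUnit (l : ZMod q) := by
    rw [ZMod.isUnit_iff_coprime]
    exact ((Nat.Prime.coprime_iff_not_dvd hq).2 (Nat.not_dvd_of_pos_of_lt hl hlq)).symm
  have hmod (p : ℕ) : p % q = l ↔ (p : ZMod q) = l := by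
    rw [ZMod.natCast_eq_natCast_iff', Nat.mod_eq_of_lt hlq]
  have htot : (q.totient : ℝ)⁻¹ = 1 / ((q : ℝ) - 1) := by
    rw [Nat.totient_prime hq, Nat.cast_sub hq.one_le, Nat.cast_one, one_div]
  simpa only [hmod, htot] using tendsto_sum_prime_inv_div_log_log hunit
end
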